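/- Every matrix in SL_3(𝔽_7) that has no eigenvalue in 𝔽_7 has order 19 or order 57 as a group element. -/

import Mathlib

open Matrix Polynomial

abbrev SL3 := Matrix.SpecialLinearGroup (Fin 3) (ZMod 7)

/-- `M` has an eigenvalue in `𝔽₇`. -/
def HasEigenvalueF7 (M : SL3) : Prop :=
  ∃ (μ : ZMod 7) (v : Fin 3 → ZMod 7), v ≠ 0 ∧ M.val.mulVec v = μ • v

/-!
Without eigenvalues the characteristic polynomial `p` of `M` is an irreducible cubic over `𝔽₇`,
so `α ↦ M` embeds the field `𝔽₇[α] = 𝔽₇[X]/(p) ≅ 𝔽₃₄₃` into the matrix ring and `M` has the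
order of `α`. The norm `α ^ (1 + 7 + 49) = α ^ 57` of `α` is `det M = 1`, while `α ^ 7 ≠ α`
because `α ∉ 𝔽₇`. Hence the order of `α` divides `57 = 3 · 19` but not `6`.
-/

namespace AdjoinRoot
variable {K : Type*} [Field K] {p : K[X]}

theorem orderOf_root_eq_orderOf {B : Type*} [Ring B] [Nontrivial B] [Algebra K B]
    (hp : Irreducible p) {x : B} (hx : aeval x p = 0) : orderOf (root p) = orderOf x := by
  refine orderOf_eq_orderOf_iff.2 fun k => ?_
  have hroot : aeval (root p) (X ^ k - 1 : K[X]) = root p ^ k - 1 := by simp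
  have hx' : aeval x (X ^ k - 1 : K[X]) = x ^ k - 1 := by simp
  rw [← sub_eq_zero, ← hroot, aeval_eq, mk_eq_zero, ← hp.dvd_iff_aeval_eq_zero hx, hx',
    sub_eq_zero]

theorem norm_root_of_monic (hp : p.Monic) :
    Algebra.norm K (root p) = (-1) ^ p.natDegree * p.coeff 0 := by
  rw [← powerBasis_gen hp.ne_zero, Algebra.PowerBasis.norm_gen_eq_coeff_zero_minpoly,
    minpoly_powerBasis_gen_of_monic hp, powerBasis_dim]

theorem root_pow_card_ne_root (hp : Irreducible p) (hdeg : p.natDegree ≠ 1) :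
    root p ^ Nat.card K ≠ root p := by
  intro h
  have hdvd : p ∣ X ^ Nat.card K ^ 1 - X := by
    rw [← mk_eq_zero, ← aeval_eq]
    simp [h]
  exact hdeg (Nat.dvd_one.1 (hp.natDegree_dvd_of_dvd_X_pow_card_pow_sub_X hdvd))

theorem root_pow_eq_algebraMap_norm [Finite K] (hp : Irreducible p) :
    root p ^ ((Nat.card K ^ p.natDegree - 1) / (Nat.card K - 1)) =
      algebraMap K (AdjoinRoot p) (Algebra.norm K (root p)) := by
  have := Fact.mk hp
  have := (powerBasis hp.ne_zero).finite
  have := Module.finite_of_finite K (M := AdjoinRoot p)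
  rw [FiniteField.algebraMap_norm_eq_pow,
    Module.natCard_eq_pow_finrank (K := K) (V := AdjoinRoot p),
    (powerBasis hp.ne_zero).finrank, powerBasis_dim]

end AdjoinRoot

theorem orderOf_eq_19_or_57 {G : Type*} [Monoid G] {x : G} (h57 : x ^ 57 = 1) (h7 : x ^ 7 ≠ x) :
    orderOf x = 19 ∨ orderOf x = 57 := by
  have hdvd : orderOf x ∣ 57 := orderOf_dvd_of_pow_eq_one h57
  have hndvd : ¬ orderOf x ∣ 6 := fun h6 => h7 (by
    rw [pow_succ, orderOf_dvd_iff_pow_eq_one.1 h6, one_mul])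
  have : orderOf x ∈ Nat.divisors 57 := Nat.mem_divisors.2 ⟨hdvd, by norm_num⟩
  rw [show Nat.divisors 57 = {1, 3, 19, 57} by decide] at this
  simp only [Finset.mem_insert, Finset.mem_singleton] at this
  rcases this with h | h | h | h <;> simp_all

namespace Matrix
variable {K n : Type*} [Field K] [Fintype n] [DecidableEq n]

theorem isRoot_charpoly_iff_exists_mulVec_eq_smul (A : Matrix n n K) (μ : K) :
    A.charpoly.IsRoot μ ↔ ∃ v ≠ 0, A *ᵥ v = μ • v := by
  rw [IsRoot, eval_charpoly, ← exists_mulVec_eq_zero_iff]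
  simp only [sub_mulVec, scalar_apply, ← smul_one_eq_diagonal, smul_mulVec, one_mulVec,
    sub_eq_zero, eq_comm]

theorem irreducible_charpoly_of_forall_mulVec_ne_smul (A : Matrix n n K)
    (h2 : 2 ≤ Fintype.card n) (h3 : Fintype.card n ≤ 3)
    (hA : ∀ (μ : K) (v : n → K), v ≠ 0 → A *ᵥ v ≠ μ • v) : Irreducible A.charpoly := by
  rw [irreducible_iff_roots_eq_zero_of_degree_le_three] <;>
    try rwa [charpoly_natDegree_eq_dim]
  refine Multiset.eq_zero_of_forall_notMem fun μ hμ => ?_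
  obtain ⟨v, hv, hAv⟩ := (isRoot_charpoly_iff_exists_mulVec_eq_smul A μ).1
    (isRoot_of_mem_roots hμ)
  exact hA μ v hv hAv

theorem norm_root_charpoly (A : Matrix n n K) :
    Algebra.norm K (AdjoinRoot.root A.charpoly) = A.det := by
  rw [AdjoinRoot.norm_root_of_monic A.charpoly_monic, det_eq_sign_charpoly_coeff,
    charpoly_natDegree_eq_dim]

end Matrix

theorem order_of_no_eigenvalue (M : SL3) (h : ¬ HasEigenvalueF7 M) :
    orderOf M = 19 ∨ orderOf M = 57 := by
  rw [← orderOf_injective SpecialLinearGroup.coeMonoidHom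
    SpecialLinearGroup.coeMonoidHom_injective M]
  have : Fact (Nat.Prime 7) := ⟨by norm_num⟩
  have hirr : Irreducible M.val.charpoly :=
    M.val.irreducible_charpoly_of_forall_mulVec_ne_smul (by simp) (by simp)
      fun μ v hv hMv => h ⟨μ, v, hv, hMv⟩
  have hdeg : M.val.charpoly.natDegree = 3 := by simp [Matrix.charpoly_natDegree_eq_dim]
  set α := AdjoinRoot.root M.val.charpoly
  have h57 : α ^ 57 = 1 := by
    have := AdjoinRoot.root_pow_eq_algebraMap_norm hirr
    rwa [Matrix.norm_root_charpoly, M.det_coe, map_one, hdeg, Nat.card_zmod] at this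
  have h7 : α ^ 7 ≠ α := by
    simpa using AdjoinRoot.root_pow_card_ne_root hirr (by omega)
  rw [SpecialLinearGroup.coeMonoidHom_apply,
    ← AdjoinRoot.orderOf_root_eq_orderOf hirr M.val.aeval_self_charpoly]
  exact orderOf_eq_19_or_57 h57 h7
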